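/- In a frame L, if S is an exact sublocale and y ∈ L, then the sublocales S ∩ 𝔠(y) and S ∩ 𝔬(y) are exact, where 𝔠(y) = {x : y ≤ x} and 𝔬(y) = {y ⇨ b : b ∈ L}. -/

import Mathlib

/-- A subset of a frame has exact infimum if joining commutes with the infimum. -/
def ExactInfSet {L : Type*} [Order.Frame L] (S : Set L) : Prop :=
  ∀ z : L, sInf S ⊔ z = sInf ((fun x => x ⊔ z) '' S)

/-- A sublocale of a frame: closed under all infima and under `x ⇨ -`. -/
def IsSublocale {L : Type*} [Order.Frame L] (S : Set L) : Prop :=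
  (∀ T : Set L, T ⊆ S → sInf T ∈ S) ∧ ∀ x : L, ∀ s ∈ S, x ⇨ s ∈ S

/-- The surjection `ν_S` associated to a sublocale `S`. -/
def nuMap {L : Type*} [Order.Frame L] (S : Set L) (x : L) : L :=
  sInf {s ∈ S | x ≤ s}

/-- An exact sublocale: a sublocale whose surjection preserves exact meets. -/
def IsExactSublocale {L : Type*} [Order.Frame L] (S : Set L) : Prop :=
  IsSublocale S ∧ ∀ T : Set L, ExactInfSet T → sInf (nuMap S '' T) = nuMap S (sInf T)

/-!
Both surjections are expressed through `ν_S`: the one of `S ∩ 𝔠(y)` is `x ↦ ν_S (x ⊔ y)` and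
the one of `S ∩ 𝔬(y)` is `x ↦ y ⇨ ν_S x`. Joining a family with exact infimum with `y` keeps
it exact, and `y ⇨ -` preserves all infima, so exactness of `ν_S` transfers to both.
-/

section Sublocale

variable {L : Type*} [Order.Frame L]

theorem IsSublocale.inter {S S' : Set L} (hS : IsSublocale S) (hS' : IsSublocale S') :
    IsSublocale (S ∩ S') :=
  ⟨fun T hT => ⟨hS.1 T fun _ ht => (hT ht).1, hS'.1 T fun _ ht => (hT ht).2⟩,
    fun x _ hs => ⟨hS.2 x _ hs.1, hS'.2 x _ hs.2⟩⟩

theorem isSublocale_closed (y : L) : IsSublocale {x : L | y ≤ x} :=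
  ⟨fun _ hT => le_sInf hT, fun _ _ hs => hs.trans le_himp⟩

theorem isSublocale_open (y : L) : IsSublocale {x : L | ∃ b : L, x = y ⇨ b} := by
  refine ⟨fun T hT => ⟨sInf T, le_antisymm le_himp (le_sInf fun t ht => ?_)⟩, ?_⟩
  · obtain ⟨b, rfl⟩ := hT ht
    calc y ⇨ sInf T ≤ y ⇨ y ⇨ b := himp_le_himp_left (sInf_le ht)
      _ = y ⇨ b := himp_idem
  · rintro x _ ⟨b, rfl⟩
    exact ⟨x ⇨ b, himp_left_comm x y b⟩

theorem nuMap_mem {S : Set L} (hS : IsSublocale S) (x : L) : nuMap S x ∈ S :=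
  hS.1 _ fun _ hs => hs.1

theorem le_nuMap (S : Set L) (x : L) : x ≤ nuMap S x :=
  le_sInf fun _ hs => hs.2

theorem nuMap_le {S : Set L} {s x : L} (hs : s ∈ S) (hx : x ≤ s) : nuMap S x ≤ s :=
  sInf_le ⟨hs, hx⟩

theorem nuMap_inter_closed (S : Set L) (y x : L) :
    nuMap (S ∩ {x : L | y ≤ x}) x = nuMap S (x ⊔ y) := by
  simp only [nuMap, Set.mem_inter_iff, Set.mem_ofPred_eq, sup_le_iff, and_assoc,
    and_comm (a := y ≤ _)]

theorem nuMap_inter_open {S : Set L} (hS : IsSublocale S) (y x : L) :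
    nuMap (S ∩ {x : L | ∃ b : L, x = y ⇨ b}) x = y ⇨ nuMap S x := by
  refine le_antisymm
    (nuMap_le ⟨hS.2 y _ (nuMap_mem hS x), _, rfl⟩ ((le_nuMap S x).trans le_himp)) (le_sInf ?_)
  rintro _ ⟨⟨hs, b, rfl⟩, hx⟩
  calc y ⇨ nuMap S x ≤ y ⇨ y ⇨ b := himp_le_himp_left (nuMap_le hs hx)
    _ = y ⇨ b := himp_idem

theorem sInf_image_himp (y : L) (U : Set L) : sInf ((y ⇨ ·) '' U) = y ⇨ sInf U := by
  rw [sInf_image, sInf_eq_iInf]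
  simp only [himp_iInf_eq]

theorem ExactInfSet.image_sup {T : Set L} (hT : ExactInfSet T) (y : L) :
    ExactInfSet ((· ⊔ y) '' T) := by
  intro z
  rw [Set.image_image, ← hT y, sup_assoc, hT (y ⊔ z)]
  simp only [sup_assoc]

theorem IsExactSublocale.inter_closed {S : Set L} (hS : IsExactSublocale S) (y : L) :
    IsExactSublocale (S ∩ {x : L | y ≤ x}) := by
  refine ⟨hS.1.inter (isSublocale_closed y), fun T hT => ?_⟩
  have hν : nuMap (S ∩ {x : L | y ≤ x}) = nuMap S ∘ (· ⊔ y) := funext (nuMap_inter_closed S y)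
  rw [hν, Set.image_comp, hS.2 _ (hT.image_sup y), ← hT y, Function.comp_apply]

theorem IsExactSublocale.inter_open {S : Set L} (hS : IsExactSublocale S) (y : L) :
    IsExactSublocale (S ∩ {x : L | ∃ b : L, x = y ⇨ b}) := by
  refine ⟨hS.1.inter (isSublocale_open y), fun T hT => ?_⟩
  have hν : nuMap (S ∩ {x : L | ∃ b : L, x = y ⇨ b}) = (y ⇨ ·) ∘ nuMap S :=
    funext (nuMap_inter_open hS.1 y)
  rw [hν, Set.image_comp, sInf_image_himp, hS.2 T hT, Function.comp_apply]

end Sublocale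

/-- if `S` is an exact sublocale of a frame `L` and `y ∈ L`, then
`S ∩ 𝔠(y)` and `S ∩ 𝔬(y)` are exact sublocales. -/
theorem exact_sublocale_inter_closed_open {L : Type*} [Order.Frame L] (S : Set L)
    (hS : IsExactSublocale S) (y : L) :
    IsExactSublocale (S ∩ {x : L | y ≤ x}) ∧
      IsExactSublocale (S ∩ {x : L | ∃ b : L, x = y ⇨ b}) :=
  ⟨hS.inter_closed y, hS.inter_open y⟩
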